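/- For every real ε with 0 < ε ≤ 1/3 and every natural number k ≥ 1, there exists a finite Markov chain with 2k + 2 states that has at least 2^k pairwise distinct minimal ε-cores. Concretely, the chain with states {s₀, t} ∪ {a₁, b₁, …, a_k, b_k}, initial state s₀, transition δ(s₀) = Σᵢ₌₁ᵏ p·(δ_{aᵢ} + δ_{bᵢ}) + (1 − 2kp)·δ_t where p = ε/(k+1), and with t and all aᵢ, bᵢ absorbing, has the property that a set C is a minimal ε-core exactly when C = {s₀, t} ∪ L for some k-element subset L of {a₁, b₁, …, a_k, b_k}; hence there are binom(2k, k) ≥ 2^k minimal ε-cores. -/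

import Mathlib

open MeasureTheory

/-- A Markov chain: an initial state and a transition distribution for each state. -/
structure MC (S : Type*) where
  init : S
  trans : S → PMF S

/-- The space of infinite paths `s₀ s₁ s₂ ⋯` of a Markov chain. -/
def MCTraj (S : Type*) := ℕ → S

instance {S : Type*} : MeasurableSpace (MCTraj S) :=
  @MeasurableSpace.pi ℕ (fun _ => S) (fun _ => ⊤)

variable {S : Type*}

/-- The probability that a path of the chain starting in state `s` begins with exactly the
finite sequence `pre` of states. -/
noncomputable def mcCylProb [DecidableEq S] (M : MC S) : S → List S → ENNReal
  | _, [] => 1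
  | s, t :: rest =>
      (if t = s then 1 else 0) * ∑' s' : S, (M.trans s) s' * mcCylProb M s' rest

/-- The cylinder set of all infinite paths whose first coordinates agree with `pre`. -/
def MCCyl (pre : List S) : Set (MCTraj S) :=
  {ω | ∀ i : Fin pre.length, ω i = pre.get i}

/-- `P` is the family of path measures of `M` induced (via the Ionescu–Tulcea construction)
by the start states: each `P s` is a probability measure on infinite paths starting in `s`
whose value on every cylinder is the product of the transition probabilities. -/
def IsMCPathMeasure [DecidableEq S] (M : MC S) (P : S → Measure (MCTraj S)) : Prop :=
  (∀ s, IsProbabilityMeasure (P s)) ∧ ∀ s pre, P s (MCCyl pre) = mcCylProb M s pre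

/-- The set of paths that visit `R` at some point. -/
def MCReach (R : Set S) : Set (MCTraj S) := {ω | ∃ i, ω i ∈ R}

/-- `C` is an `ε`-core of the chain: the probability of ever leaving `C` is `< ε`. -/
def IsMCCore [DecidableEq S] (M : MC S) (P : S → Measure (MCTraj S)) (ε : ℝ)
    (C : Set S) : Prop :=
  P M.init (MCReach Cᶜ) < ENNReal.ofReal ε

/-- `C` is a minimal `ε`-core: it is an `ε`-core and no proper subset of it is one. -/
def IsMinimalMCCore [DecidableEq S] (M : MC S) (P : S → Measure (MCTraj S)) (ε : ℝ)
    (C : Set S) : Prop :=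
  IsMCCore M P ε C ∧ ∀ C' ⊂ C, ¬ IsMCCore M P ε C'

/-- The states of the chain witnessing exponentially many minimal cores: `none` is the
initial state `s₀`, `some none` is the absorbing state `t`, and `some (some (i, ff/tt))`
are the absorbing states `aᵢ` and `bᵢ`. -/
abbrev ExpState (k : ℕ) := Option (Option (Fin k × Bool))

/-- The successor weights of the initial state: weight `p = ε/(k+1)` on each of the `2k`
states `aᵢ`, `bᵢ` and weight `1 − 2kp` on `t`. -/
noncomputable def expWeight (k : ℕ) (ε : ℝ) : ExpState k → ENNReal
  | none => 0
  | some none => 1 - ((2 * k : ℕ) : ENNReal) * ENNReal.ofReal (ε / (k + 1))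
  | some (some _) => ENNReal.ofReal (ε / (k + 1))

lemma expWeight_sum (k : ℕ) (ε : ℝ) (hε1 : 0 < ε) (hε2 : ε ≤ 1 / 3) :
    ∑ t : ExpState k, expWeight k ε t = 1 := by
  classical
  set p : ENNReal := ENNReal.ofReal (ε / (k + 1)) with hp
  have hk1 : (0 : ℝ) < (k : ℝ) + 1 := by positivity
  have hreal : (2 * (k : ℝ)) * (ε / ((k : ℝ) + 1)) ≤ 1 := by
    rw [mul_div_assoc']
    rw [div_le_one hk1]
    have hk0 : (0 : ℝ) ≤ 2 * (k : ℝ) := by positivity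
    have := mul_le_mul_of_nonneg_left hε2 hk0
    linarith
  have hle : ((2 * k : ℕ) : ENNReal) * p ≤ 1 := by
    have hcast : ((2 * k : ℕ) : ENNReal) = ENNReal.ofReal (2 * (k : ℝ)) := by
      rw [← ENNReal.ofReal_natCast]; push_cast; ring_nf
    rw [hp, hcast, ← ENNReal.ofReal_mul (by positivity)]
    exact ENNReal.ofReal_le_one.mpr hreal
  have hconst : (∑ _x : Fin k × Bool, p) = ((2 * k : ℕ) : ENNReal) * p := by
    rw [Finset.sum_const, Finset.card_univ, Fintype.card_prod, Fintype.card_fin,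
      Fintype.card_bool, nsmul_eq_mul]
    congr 1
    push_cast
    ring
  rw [Fintype.sum_option, Fintype.sum_option]
  have h0 : expWeight k ε none = 0 := rfl
  have ht : expWeight k ε (some none) = 1 - ((2 * k : ℕ) : ENNReal) * p := rfl
  have hi : (∑ x : Fin k × Bool, expWeight k ε (some (some x)))
      = ((2 * k : ℕ) : ENNReal) * p := hconst
  rw [h0, ht, hi, zero_add, tsub_add_cancel_of_le hle]

/-- The Markov chain with `2k + 2` states exhibiting exponentially many minimal `ε`-cores:
`δ(s₀) = Σᵢ p·(δ_{aᵢ} + δ_{bᵢ}) + (1 − 2kp)·δ_t` with `p = ε/(k+1)`, and the states `t`,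
`aᵢ`, `bᵢ` are all absorbing. -/
noncomputable def expChain (k : ℕ) (ε : ℝ) (hε1 : 0 < ε) (hε2 : ε ≤ 1 / 3) :
    MC (ExpState k) where
  init := none
  trans := fun s =>
    match s with
    | none => PMF.ofFintype (expWeight k ε) (expWeight_sum k ε hε1 hε2)
    | some x => PMF.pure (some x)

/-!
From `s₀` every successor is absorbing, so a path started in `s₀ ∈ C` leaves `C` exactly when
its first step does: the probability of ever leaving `C` is the weight `δ(s₀)(Cᶜ)`. The weight
`1 - 2kp` of `t` is at least `ε`, and `j * p < ε` iff `j ≤ k`, so `C` is an `ε`-core iff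
`s₀, t ∈ C` and `C` omits at most `k` of the `2k` states `aᵢ, bᵢ`. The minimal ones keep exactly
`k` of them, one for each `k`-subset of the `2k` states.
-/

namespace PMF

variable {α : Type*}

theorem toOuterMeasure_apply_compl (p : PMF α) (s : Set α) :
    p.toOuterMeasure sᶜ = 1 - p.toOuterMeasure s := by
  have hle : p.toOuterMeasure s ≤ 1 := (p.toOuterMeasure.mono (Set.subset_univ s)).trans_eq
    ((p.toOuterMeasure_apply_eq_one_iff _).2 (Set.subset_univ _))
  refine ENNReal.eq_sub_of_add_eq (ne_top_of_le_ne_top ENNReal.one_ne_top hle) ?_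
  rw [toOuterMeasure_apply, toOuterMeasure_apply, ← ENNReal.tsum_add]
  simp_rw [Set.indicator_compl_add_self_apply]
  exact p.tsum_coe

end PMF

theorem Nat.two_pow_le_centralBinom (n : ℕ) : 2 ^ n ≤ n.centralBinom := by
  induction n with
  | zero => simp
  | succ n ih =>
    have hstep : 2 * n.centralBinom ≤ (n + 1).centralBinom := by
      refine Nat.le_of_mul_le_mul_left ?_ n.succ_pos
      rw [Nat.succ_mul_centralBinom_succ]
      nlinarith
    rw [pow_succ]
    linarith

theorem Finset.ncard_setOf_card_eq (α : Type*) [Fintype α] (n : ℕ) :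
    {L : Finset α | L.card = n}.ncard = (Fintype.card α).choose n := by
  rw [← Nat.card_coe_set_eq, Nat.card_eq_fintype_card]
  exact Fintype.card_finset_len n

section Cylinders

variable [DecidableEq S] (M : MC S)

theorem mcCylProb_singleton (s t : S) : mcCylProb M s [t] = if t = s then 1 else 0 := by
  simp [mcCylProb, (M.trans s).tsum_coe]

theorem mcCylProb_cons_cons (s t : S) (rest : List S) :
    mcCylProb M s (s :: t :: rest) = M.trans s t * mcCylProb M t (t :: rest) := by
  rw [mcCylProb, if_pos rfl, one_mul, tsum_eq_single t]
  intro s' hs'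
  rw [mcCylProb, if_neg (Ne.symm hs'), zero_mul, mul_zero]

theorem mcCylProb_pair (s t : S) : mcCylProb M s [s, t] = M.trans s t := by
  rw [mcCylProb_cons_cons, mcCylProb_singleton, if_pos rfl, mul_one]

variable {M} {a : S} (ha : M.trans a = PMF.pure a)
include ha

theorem mcCylProb_replicate_of_absorbing (n : ℕ) :
    mcCylProb M a (a :: List.replicate n a) = 1 := by
  induction n with
  | zero => rw [List.replicate_zero, mcCylProb_singleton, if_pos rfl]
  | succ n ih =>
    rw [List.replicate_succ, mcCylProb_cons_cons, ha, PMF.pure_apply_self, one_mul, ih]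

theorem mcCylProb_cons_replicate_of_absorbing (s : S) (n : ℕ) :
    mcCylProb M s (s :: List.replicate (n + 1) a) = M.trans s a := by
  rw [List.replicate_succ, mcCylProb_cons_cons, mcCylProb_replicate_of_absorbing ha, mul_one]

end Cylinders

theorem mem_MCCyl_cons_replicate {s a : S} {n : ℕ} {ω : MCTraj S} :
    ω ∈ MCCyl (s :: List.replicate n a) ↔ ω 0 = s ∧ ∀ i < n, ω (i + 1) = a := by
  constructor
  · intro h
    exact ⟨h ⟨0, by simp⟩, fun i hi => by simpa using h ⟨i + 1, by simpa using hi⟩⟩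
  · rintro ⟨h0, hs⟩ ⟨_ | i, hi⟩
    · exact h0
    · simpa using hs i (by simpa using hi)

theorem mem_MCCyl_pair {s t : S} {ω : MCTraj S} : ω ∈ MCCyl [s, t] ↔ ω 0 = s ∧ ω 1 = t := by
  simpa using mem_MCCyl_cons_replicate (a := t) (n := 1) (ω := ω) (s := s)

theorem measurableSet_MCCyl (pre : List S) : MeasurableSet (MCCyl pre) := by
  have : MCCyl pre = ⋂ i : Fin pre.length, (fun ω : MCTraj S => ω i) ⁻¹' {pre.get i} := by
    ext ω; simp [MCCyl]
  rw [this]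
  exact .iInter fun i =>
    @measurable_pi_apply ℕ (fun _ => S) (fun _ => ⊤) (i : ℕ) _ MeasurableSpace.measurableSet_top

def MCStay (s a : S) : Set (MCTraj S) := {ω | ω 0 = s ∧ ∀ i, ω (i + 1) = a}

theorem MCStay_eq_iInter (s a : S) :
    MCStay s a = ⋂ n : ℕ, MCCyl (s :: List.replicate (n + 1) a) := by
  ext ω
  simp only [MCStay, Set.mem_ofPred_eq, Set.mem_iInter, mem_MCCyl_cons_replicate]
  exact ⟨fun h n => ⟨h.1, fun i _ => h.2 i⟩, fun h => ⟨(h 0).1, fun i => (h i).2 i i.lt_succ_self⟩⟩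

theorem measurableSet_MCStay (s a : S) : MeasurableSet (MCStay s a) := by
  rw [MCStay_eq_iInter]
  exact .iInter fun _ => measurableSet_MCCyl _

namespace IsMCPathMeasure

variable [DecidableEq S] {M : MC S} {P : S → Measure (MCTraj S)} (hP : IsMCPathMeasure M P)
include hP

theorem measure_MCStay {a : S} (ha : M.trans a = PMF.pure a) (s : S) :
    P s (MCStay s a) = M.trans s a := by
  have := hP.1 s
  have hanti : Antitone fun n : ℕ => MCCyl (s :: List.replicate (n + 1) a) := by
    refine antitone_nat_of_succ_le fun n ω hω => ?_
    rw [mem_MCCyl_cons_replicate] at hω ⊢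
    exact ⟨hω.1, fun i hi => hω.2 i (Nat.lt_succ_of_lt hi)⟩
  rw [MCStay_eq_iInter, hanti.measure_iInter (fun _ => (measurableSet_MCCyl _).nullMeasurableSet)
    ⟨0, measure_ne_top _ _⟩]
  simp only [hP.2, mcCylProb_cons_replicate_of_absorbing ha, iInf_const]

theorem measure_reach_of_notMem {C : Set S} {s : S} (hs : s ∉ C) : P s (MCReach Cᶜ) = 1 := by
  have := hP.1 s
  refine le_antisymm prob_le_one ?_
  calc 1 = P s (MCCyl [s]) := by rw [hP.2, mcCylProb_singleton, if_pos rfl]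
    _ ≤ P s (MCReach Cᶜ) := measure_mono fun ω hω =>
        ⟨0, ((mem_MCCyl_cons_replicate (a := s) (n := 0)).1 hω).1 ▸ hs⟩

variable [Countable S]

theorem toOuterMeasure_le_measure_reach (C : Set S) (s : S) :
    (M.trans s).toOuterMeasure C ≤ P s (MCReach C) := by
  have hdisj : C.PairwiseDisjoint fun t => MCCyl [s, t] := fun t _ t' _ htt' =>
    Set.disjoint_left.2 fun ω h h' =>
      htt' ((mem_MCCyl_pair.1 h).2 ▸ (mem_MCCyl_pair.1 h').2)
  calc (M.trans s).toOuterMeasure C = P s (⋃ t ∈ C, MCCyl [s, t]) := by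
        rw [measure_biUnion C.to_countable hdisj fun _ _ => measurableSet_MCCyl _,
          PMF.toOuterMeasure_apply, ← tsum_subtype]
        simp only [hP.2, mcCylProb_pair]
    _ ≤ P s (MCReach C) := by
        refine measure_mono fun ω hω => ?_
        obtain ⟨t, ht, hω⟩ := Set.mem_iUnion₂.1 hω
        exact ⟨1, (mem_MCCyl_pair.1 hω).2 ▸ ht⟩

theorem measure_reach_compl_le_toOuterMeasure {C : Set S} {s : S} (hs : s ∈ C)
    (hsucc : ∀ a ∈ (M.trans s).support, M.trans a = PMF.pure a) :
    P s (MCReach Cᶜ) ≤ (M.trans s).toOuterMeasure Cᶜ := by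
  have := hP.1 s
  set A := C ∩ (M.trans s).support
  have hdisj : A.PairwiseDisjoint (MCStay s) := fun a _ a' _ haa' =>
    Set.disjoint_left.2 fun ω h h' => haa' (h.2 0 ▸ h'.2 0)
  have hstay : P s (⋃ a ∈ A, MCStay s a) = (M.trans s).toOuterMeasure C := by
    rw [measure_biUnion A.to_countable hdisj fun _ _ => measurableSet_MCStay _ _,
      ← PMF.toOuterMeasure_apply_inter_support, PMF.toOuterMeasure_apply, ← tsum_subtype]
    exact tsum_congr fun a => hP.measure_MCStay (hsucc a a.2.2) s
  have hreach : MCReach Cᶜ ⊆ (⋃ a ∈ A, MCStay s a)ᶜ := by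
    rintro ω ⟨_ | i, hi⟩ hω
    all_goals obtain ⟨a, ha, hωa⟩ := Set.mem_iUnion₂.1 hω
    · exact hi (hωa.1 ▸ hs)
    · exact hi (hωa.2 i ▸ ha.1)
  calc P s (MCReach Cᶜ) ≤ P s (⋃ a ∈ A, MCStay s a)ᶜ := measure_mono hreach
    _ = (M.trans s).toOuterMeasure Cᶜ := by
        rw [prob_compl_eq_one_sub (.biUnion A.to_countable fun _ _ => measurableSet_MCStay _ _),
          hstay, PMF.toOuterMeasure_apply_compl]

theorem measure_reach_compl {C : Set S} {s : S} (hs : s ∈ C)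
    (hsucc : ∀ a ∈ (M.trans s).support, M.trans a = PMF.pure a) :
    P s (MCReach Cᶜ) = (M.trans s).toOuterMeasure Cᶜ :=
  le_antisymm (hP.measure_reach_compl_le_toOuterMeasure hs hsucc)
    (hP.toOuterMeasure_le_measure_reach Cᶜ s)

end IsMCPathMeasure

section ExpChain

variable {k : ℕ}

open Classical in
noncomputable def leavesIn (C : Set (ExpState k)) : Finset (Fin k × Bool) :=
  Finset.univ.filter fun x => some (some x) ∈ C

def coreWithLeaves (L : Finset (Fin k × Bool)) : Set (ExpState k) :=
  {none, some none} ∪ (fun x => some (some x)) '' (L : Set (Fin k × Bool))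

theorem mem_leavesIn {C : Set (ExpState k)} {x : Fin k × Bool} :
    x ∈ leavesIn C ↔ some (some x) ∈ C := by
  simp [leavesIn]

theorem leavesIn_coreWithLeaves (L : Finset (Fin k × Bool)) :
    leavesIn (coreWithLeaves L) = L := by
  ext x
  simp [mem_leavesIn, coreWithLeaves]

theorem coreWithLeaves_injective : Function.Injective (coreWithLeaves (k := k)) :=
  Function.LeftInverse.injective leavesIn_coreWithLeaves

theorem leavesIn_mono {C D : Set (ExpState k)} (h : C ⊆ D) : leavesIn C ⊆ leavesIn D :=
  fun _ hx => mem_leavesIn.2 (h (mem_leavesIn.1 hx))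

theorem coreWithLeaves_subset {C : Set (ExpState k)} {L : Finset (Fin k × Bool)}
    (h0 : none ∈ C) (ht : some none ∈ C) (hL : L ⊆ leavesIn C) : coreWithLeaves L ⊆ C := by
  rintro _ ((rfl | rfl) | ⟨x, hx, rfl⟩)
  exacts [h0, ht, mem_leavesIn.1 (hL hx)]

variable {ε : ℝ} (hε1 : 0 < ε) (hε2 : ε ≤ 1 / 3)

theorem expChain_trans_none_apply (s : ExpState k) :
    (expChain k ε hε1 hε2).trans none s = expWeight k ε s :=
  rfl

theorem expChain_succ_absorbing :
    ∀ a ∈ ((expChain k ε hε1 hε2).trans none).support,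
      (expChain k ε hε1 hε2).trans a = PMF.pure a := by
  rintro (_ | x) ha
  · simp [PMF.mem_support_iff, expChain_trans_none_apply, expWeight] at ha
  · rfl

theorem toOuterMeasure_expChain_trans_none {C : Set (ExpState k)} (h0 : none ∈ C) :
    ((expChain k ε hε1 hε2).trans none).toOuterMeasure Cᶜ =
      Cᶜ.indicator (expWeight k ε) (some none) +
        ((leavesIn C)ᶜ.card : ENNReal) * ENNReal.ofReal (ε / (k + 1)) := by
  have htrans : ⇑((expChain k ε hε1 hε2).trans none) = expWeight k ε :=
    funext (expChain_trans_none_apply hε1 hε2)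
  rw [PMF.toOuterMeasure_apply_fintype, Fintype.sum_option, Fintype.sum_option, htrans,
    Set.indicator_of_notMem (Set.notMem_compl_iff.2 h0), zero_add, ← nsmul_eq_mul,
    ← Finset.sum_const, ← Finset.sum_compl_add_sum (leavesIn C)]
  congr 1
  rw [Finset.sum_eq_zero fun x hx => Set.indicator_of_notMem
    (Set.notMem_compl_iff.2 (mem_leavesIn.1 hx)) _, add_zero]
  exact Finset.sum_congr rfl fun x hx =>
    Set.indicator_of_mem (mem_leavesIn.not.1 (Finset.mem_compl.1 hx)) _

include hε1 in
theorem natCast_mul_lt_ofReal_iff (j : ℕ) :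
    (j : ENNReal) * ENNReal.ofReal (ε / (k + 1)) < ENNReal.ofReal ε ↔ j ≤ k := by
  have hk : (0 : ℝ) < k + 1 := by positivity
  rw [← ENNReal.ofReal_natCast, ← ENNReal.ofReal_mul (by positivity),
    ENNReal.ofReal_lt_ofReal_iff hε1, mul_div_assoc', div_lt_iff₀ hk, mul_comm ε,
    mul_lt_mul_iff_of_pos_right hε1, ← Nat.lt_succ_iff]
  exact_mod_cast Iff.rfl

include hε1 hε2 in
theorem ofReal_le_expWeight_some_none : ENNReal.ofReal ε ≤ expWeight k ε (some none) := by
  have hk : (0 : ℝ) < k + 1 := by positivity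
  have hsum : 2 * (k : ℝ) * (ε / (k + 1)) + ε ≤ 1 := by
    rw [mul_div_assoc', div_add' _ _ _ hk.ne', div_le_one hk]
    nlinarith [(k.cast_nonneg : (0 : ℝ) ≤ k)]
  calc ENNReal.ofReal ε ≤ ENNReal.ofReal (1 - ((2 * k : ℕ) : ℝ) * (ε / (k + 1))) :=
        ENNReal.ofReal_le_ofReal (by push_cast; linarith)
    _ = expWeight k ε (some none) := by
        rw [ENNReal.ofReal_sub _ (by positivity), ENNReal.ofReal_one,
          ENNReal.ofReal_mul (by positivity), ENNReal.ofReal_natCast]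
        rfl

variable {P : ExpState k → Measure (MCTraj (ExpState k))}
  (hP : IsMCPathMeasure (expChain k ε hε1 hε2) P)
include hP

theorem isMCCore_expChain_iff (C : Set (ExpState k)) :
    IsMCCore (expChain k ε hε1 hε2) P ε C ↔ none ∈ C ∧ some none ∈ C ∧ k ≤ (leavesIn C).card := by
  have hinit : (expChain k ε hε1 hε2).init = none := rfl
  by_cases h0 : none ∈ C
  swap
  · simp only [IsMCCore, hinit, hP.measure_reach_of_notMem h0, h0, false_and, iff_false, not_lt]
    exact ENNReal.ofReal_le_one.2 (by linarith)
  rw [IsMCCore, hinit, hP.measure_reach_compl h0 (expChain_succ_absorbing hε1 hε2),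
    toOuterMeasure_expChain_trans_none hε1 hε2 h0]
  by_cases ht : some none ∈ C
  · rw [Set.indicator_of_notMem (Set.notMem_compl_iff.2 ht), zero_add,
      natCast_mul_lt_ofReal_iff hε1, Finset.card_compl]
    have hcard : (leavesIn C).card ≤ 2 * k := by
      simpa [mul_comm] using (leavesIn C).card_le_univ
    simp only [h0, ht, true_and, Fintype.card_prod, Fintype.card_fin, Fintype.card_bool]
    omega
  · simp only [ht, false_and, and_false, iff_false, not_lt]
    rw [Set.indicator_of_mem ht]
    exact (ofReal_le_expWeight_some_none hε1 hε2).trans le_self_add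

theorem isMinimalMCCore_expChain_iff (C : Set (ExpState k)) :
    IsMinimalMCCore (expChain k ε hε1 hε2) P ε C ↔
      ∃ L : Finset (Fin k × Bool), L.card = k ∧ C = coreWithLeaves L := by
  have isMCCore_coreWithLeaves (L : Finset (Fin k × Bool)) (hL : k ≤ L.card) :
      IsMCCore (expChain k ε hε1 hε2) P ε (coreWithLeaves L) :=
    (isMCCore_expChain_iff hε1 hε2 hP _).2
      ⟨by simp [coreWithLeaves], by simp [coreWithLeaves], (leavesIn_coreWithLeaves L).symm ▸ hL⟩
  constructor
  · rintro ⟨hC, hmin⟩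
    obtain ⟨h0, ht, hk⟩ := (isMCCore_expChain_iff hε1 hε2 hP C).1 hC
    obtain ⟨L, hL, hLk⟩ := Finset.exists_subset_card_eq hk
    refine ⟨L, hLk, by_contra fun hne => hmin _ ?_ (isMCCore_coreWithLeaves L hLk.ge)⟩
    exact (coreWithLeaves_subset h0 ht hL).ssubset_of_ne (Ne.symm hne)
  · rintro ⟨L, hLk, rfl⟩
    refine ⟨isMCCore_coreWithLeaves L hLk.ge, fun C' hC' hcore => hC'.2 ?_⟩
    obtain ⟨h0, ht, hk⟩ := (isMCCore_expChain_iff hε1 hε2 hP C').1 hcore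
    have hle : leavesIn C' ⊆ L := leavesIn_coreWithLeaves L ▸ leavesIn_mono hC'.1
    exact coreWithLeaves_subset h0 ht (Finset.eq_of_subset_of_card_le hle (hLk.symm ▸ hk)).ge

theorem setOf_isMinimalMCCore_expChain :
    {C | IsMinimalMCCore (expChain k ε hε1 hε2) P ε C} =
      coreWithLeaves '' {L : Finset (Fin k × Bool) | L.card = k} := by
  ext C
  simp only [Set.mem_ofPred_eq, isMinimalMCCore_expChain_iff hε1 hε2 hP, Set.mem_image, eq_comm]

end ExpChain

theorem exponentially_many_minimal_cores_general (k : ℕ)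
    (ε : ℝ) (hε1 : 0 < ε) (hε2 : ε ≤ 1 / 3)
    (P : ExpState k → Measure (MCTraj (ExpState k)))
    (hP : IsMCPathMeasure (expChain k ε hε1 hε2) P) :
    Fintype.card (ExpState k) = 2 * k + 2 ∧
    (∀ C : Set (ExpState k),
      IsMinimalMCCore (expChain k ε hε1 hε2) P ε C ↔
        ∃ L : Finset (Fin k × Bool), L.card = k ∧
          C = {none, some none} ∪ (fun x => some (some x)) '' (L : Set (Fin k × Bool))) ∧
    {C : Set (ExpState k) | IsMinimalMCCore (expChain k ε hε1 hε2) P ε C}.ncard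
      = (2 * k).choose k ∧
    2 ^ k ≤ (2 * k).choose k := by
  have hleaves : Fintype.card (Fin k × Bool) = 2 * k := by simp [mul_comm]
  refine ⟨by simp [hleaves], isMinimalMCCore_expChain_iff hε1 hε2 hP, ?_, ?_⟩
  · rw [setOf_isMinimalMCCore_expChain hε1 hε2 hP,
      Set.ncard_image_of_injective _ coreWithLeaves_injective, Finset.ncard_setOf_card_eq,
      hleaves]
  · exact Nat.centralBinom_eq_two_mul_choose k ▸ Nat.two_pow_le_centralBinom k

/-- For every `0 < ε ≤ 1/3` and `k ≥ 1`, the chain `expChain k ε` has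
`2k + 2` states; a set `C` is a minimal `ε`-core exactly when `C = {s₀, t} ∪ L` for some
`k`-element set `L` of the states `aᵢ, bᵢ`; hence there are `binom(2k, k) ≥ 2^k` pairwise
distinct minimal `ε`-cores. -/
theorem exponentially_many_minimal_cores (k : ℕ) (hk : 1 ≤ k)
    (ε : ℝ) (hε1 : 0 < ε) (hε2 : ε ≤ 1 / 3)
    (P : ExpState k → Measure (MCTraj (ExpState k)))
    (hP : IsMCPathMeasure (expChain k ε hε1 hε2) P) :
    Fintype.card (ExpState k) = 2 * k + 2 ∧
    (∀ C : Set (ExpState k),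
      IsMinimalMCCore (expChain k ε hε1 hε2) P ε C ↔
        ∃ L : Finset (Fin k × Bool), L.card = k ∧
          C = {none, some none} ∪ (fun x => some (some x)) '' (L : Set (Fin k × Bool))) ∧
    {C : Set (ExpState k) | IsMinimalMCCore (expChain k ε hε1 hε2) P ε C}.ncard
      = (2 * k).choose k ∧
    2 ^ k ≤ (2 * k).choose k :=
  exponentially_many_minimal_cores_general k ε hε1 hε2 P hP
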